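/- In a generalized reachability game where every reachability set is a singleton F_i = {v_i}, Eve wins from vertex v if and only if v ∈ ⋂_i Attr(v_i) and the preorder defined by u ⪯ u' iff u ∈ Attr(u') is total on {v_1,...,v_k}. -/

import Mathlib

/-- An arena: a directed graph with every vertex having a successor,
and a partition of vertices between Eve (`eve v`) and Adam (`¬ eve v`). -/
structure Arena (V : Type) where
  E : V → V → Prop
  eve : V → Prop
  succ_exists : ∀ v, ∃ w, E v w

variable {V M : Type}

/-- A play from `v0`: an infinite path starting at `v0`. -/
def IsPlay (A : Arena V) (v0 : V) (π : ℕ → V) : Prop :=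
  π 0 = v0 ∧ ∀ n, A.E (π n) (π (n + 1))

/-- The finite history of a play up to time `n` (inclusive). -/
def hist (π : ℕ → V) (n : ℕ) : List V :=
  List.ofFn (fun i : Fin (n + 1) => π i)

/-- A strategy (a function from histories to vertices) is legal if it always moves along edges. -/
def Legal (A : Arena V) (σ : List V → V) : Prop :=
  ∀ (l : List V) (v : V), A.E v (σ (l ++ [v]))

/-- A play is consistent with Eve's strategy `σ`. -/
def ConsistentEve (A : Arena V) (σ : List V → V) (π : ℕ → V) : Prop :=
  ∀ n, A.eve (π n) → π (n + 1) = σ (hist π n)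

/-- A play is consistent with Adam's strategy `τ`. -/
def ConsistentAdam (A : Arena V) (τ : List V → V) (π : ℕ → V) : Prop :=
  ∀ n, ¬ A.eve (π n) → π (n + 1) = τ (hist π n)

/-- The generalized reachability objective: visit each `F i` at least once. -/
def GenReach {k : ℕ} (F : Fin k → Set V) (π : ℕ → V) : Prop :=
  ∀ i, ∃ n, π n ∈ F i

/-- Eve wins the generalized reachability game from `v0`. -/
def EveWinsGenReach {k : ℕ} (A : Arena V) (F : Fin k → Set V) (v0 : V) : Prop :=
  ∃ σ, Legal A σ ∧ ∀ π, IsPlay A v0 π → ConsistentEve A σ π → GenReach F π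

/-- Adam wins the generalized reachability game from `v0`. -/
def AdamWinsGenReach {k : ℕ} (A : Arena V) (F : Fin k → Set V) (v0 : V) : Prop :=
  ∃ τ, Legal A τ ∧ ∀ π, IsPlay A v0 π → ConsistentAdam A τ π → ¬ GenReach F π

/-- One step of the attractor computation. -/
def AttrStep (A : Arena V) (X : Set V) : Set V :=
  X ∪ {u | A.eve u ∧ ∃ v, A.E u v ∧ v ∈ X} ∪ {u | ¬ A.eve u ∧ ∀ v, A.E u v → v ∈ X}

/-- The attractor sequence `Attr_i(F)`. -/
def AttrSeq (A : Arena V) (F : Set V) : ℕ → Set V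
  | 0 => F
  | n + 1 => AttrStep A (AttrSeq A F n)

/-- The attractor `Attr(F)`: union of the attractor sequence. -/
def Attr (A : Arena V) (F : Set V) : Set V := ⋃ n, AttrSeq A F n

/-- A memory structure: initial memory state and update function on edges. -/
structure MemStruct (V M : Type) where
  m0 : M
  upd : M → V → V → M

/-- The sequence of memory states along a play. -/
def memTrace (μ : MemStruct V M) (π : ℕ → V) : ℕ → M
  | 0 => μ.m0
  | n + 1 => μ.upd (memTrace μ π n) (π n) (π (n + 1))

/-- A next-move function is legal if it always moves along edges. -/
def MemLegal (A : Arena V) (ν : V → M → V) : Prop :=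
  ∀ v m, A.E v (ν v m)

/-- Consistency of a play with Eve's finite-memory strategy `(μ, ν)`. -/
def MemConsistentEve (A : Arena V) (μ : MemStruct V M) (ν : V → M → V) (π : ℕ → V) : Prop :=
  ∀ n, A.eve (π n) → π (n + 1) = ν (π n) (memTrace μ π n)

/-- Consistency of a play with Adam's finite-memory strategy `(μ, ν)`. -/
def MemConsistentAdam (A : Arena V) (μ : MemStruct V M) (ν : V → M → V) (π : ℕ → V) : Prop :=
  ∀ n, ¬ A.eve (π n) → π (n + 1) = ν (π n) (memTrace μ π n)

/-- Eve wins with the finite-memory strategy `(μ, ν)` from `v0`. -/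
def EveWinsWithMem {k : ℕ} (A : Arena V) (F : Fin k → Set V) (v0 : V)
    (μ : MemStruct V M) (ν : V → M → V) : Prop :=
  MemLegal A ν ∧ ∀ π, IsPlay A v0 π → MemConsistentEve A μ ν π → GenReach F π

/-- Adam wins with the finite-memory strategy `(μ, ν)` from `v0`. -/
def AdamWinsWithMem {k : ℕ} (A : Arena V) (F : Fin k → Set V) (v0 : V)
    (μ : MemStruct V M) (ν : V → M → V) : Prop :=
  MemLegal A ν ∧ ∀ π, IsPlay A v0 π → MemConsistentAdam A μ ν π → ¬ GenReach F π

/-!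
If Eve wins with a strategy σ, Adam can answer σ by always moving outside `Attr {v i}` (at his
own vertices outside the attractor such a move exists, at Eve's every move stays outside), so
`u ∈ Attr {v i}`.
For totality, follow any play consistent with σ to the first visit of `v i` or `v j`, say `v i`:
the residual strategy of σ must still force a visit to `v j` from there, so `v i ∈ Attr {v j}`.

Conversely, sort the targets into a chain `t₁ ⪯ t₂ ⪯ ⋯` and let Eve play the attractor strategy
towards the first target of the chain not yet visited. When that target `tₐ` is reached, the
next one `t_b` satisfies `tₐ ∈ Attr {t_b}`, so the current vertex always lies in the attractor
of the current target, and the pair (number of unvisited targets, attractor rank) decreases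
lexicographically at every step.
-/
open Classical in
noncomputable def Arena.succWith (A : Arena V) (P : V → Prop) (w : V) : V :=
  if h : ∃ y, A.E w y ∧ P y then h.choose else (A.succ_exists w).choose

theorem Arena.edge_succWith (A : Arena V) (P : V → Prop) (w : V) :
    A.E w (A.succWith P w) := by
  unfold Arena.succWith
  split_ifs with h
  exacts [h.choose_spec.1, (A.succ_exists w).choose_spec]

theorem Arena.succWith_spec {A : Arena V} {P : V → Prop} {w : V} (h : ∃ y, A.E w y ∧ P y) :
    P (A.succWith P w) := by
  rw [Arena.succWith, dif_pos h]
  exact h.choose_spec.2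

section Attractor

variable {A : Arena V} {S T : Set V} {w y : V} {n : ℕ}

theorem subset_attrStep (A : Arena V) (X : Set V) : X ⊆ AttrStep A X :=
  fun _ hx => Or.inl (Or.inl hx)

theorem attrStep_mono (A : Arena V) {X Y : Set V} (h : X ⊆ Y) :
    AttrStep A X ⊆ AttrStep A Y := by
  rintro x ((hx | ⟨he, y, hxy, hy⟩) | ⟨he, hall⟩)
  · exact Or.inl (Or.inl (h hx))
  · exact Or.inl (Or.inr ⟨he, y, hxy, h hy⟩)
  · exact Or.inr ⟨he, fun y hxy => h (hall y hxy)⟩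

theorem attrSeq_mono (A : Arena V) (T : Set V) : Monotone (AttrSeq A T) :=
  monotone_nat_of_le_succ fun _ => subset_attrStep A _

theorem attrSeq_subset_attr (A : Arena V) (T : Set V) (n : ℕ) : AttrSeq A T n ⊆ Attr A T :=
  Set.subset_iUnion _ n

theorem subset_attr (A : Arena V) (T : Set V) : T ⊆ Attr A T :=
  attrSeq_subset_attr A T 0

theorem attrStep_attr_subset [Finite V] (A : Arena V) (T : Set V) :
    AttrStep A (Attr A T) ⊆ Attr A T := by
  rintro x ((hx | ⟨he, y, hxy, hy⟩) | ⟨he, hall⟩)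
  · exact hx
  · obtain ⟨n, hn⟩ := Set.mem_iUnion.mp hy
    exact attrSeq_subset_attr A T (n + 1) (Or.inl (Or.inr ⟨he, y, hxy, hn⟩))
  · -- the finitely many successors enter the attractor by some common stage `N`
    choose f hf using fun y : {y // A.E x y} => Set.mem_iUnion.mp (hall y y.2)
    obtain ⟨N, hN⟩ := (Set.finite_range f).bddAbove
    refine attrSeq_subset_attr A T (N + 1) (Or.inr ⟨he, fun y hxy => ?_⟩)
    exact attrSeq_mono A T (hN ⟨⟨y, hxy⟩, rfl⟩) (hf ⟨y, hxy⟩)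

theorem mem_attr_of_edge (he : A.eve w) (hwy : A.E w y) (hy : y ∈ Attr A T) :
    w ∈ Attr A T := by
  obtain ⟨n, hn⟩ := Set.mem_iUnion.mp hy
  exact attrSeq_subset_attr A T (n + 1) (Or.inl (Or.inr ⟨he, y, hwy, hn⟩))

theorem exists_edge_notMem_attr [Finite V] (hw : w ∉ Attr A T) (he : ¬ A.eve w) :
    ∃ y, A.E w y ∧ y ∉ Attr A T := by
  by_contra! h
  exact hw (attrStep_attr_subset A T (Or.inr ⟨he, h⟩))

theorem attr_subset_attr [Finite V] (h : S ⊆ Attr A T) : Attr A S ⊆ Attr A T := by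
  refine Set.iUnion_subset fun n => ?_
  induction n with
  | zero => exact h
  | succ n ih => exact (attrStep_mono A ih).trans (attrStep_attr_subset A T)

theorem mem_attr_trans [Finite V] {a b c : V} (hab : a ∈ Attr A {b}) (hbc : b ∈ Attr A {c}) :
    a ∈ Attr A {c} :=
  attr_subset_attr (Set.singleton_subset_iff.mpr hbc) hab

noncomputable def attrRank (A : Arena V) (T : Set V) (w : V) : ℕ :=
  sInf {n | w ∈ AttrSeq A T n}

theorem mem_attrSeq_attrRank (h : w ∈ Attr A T) : w ∈ AttrSeq A T (attrRank A T w) :=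
  Nat.sInf_mem (Set.mem_iUnion.mp h)

theorem attrRank_le (h : w ∈ AttrSeq A T n) : attrRank A T w ≤ n :=
  Nat.sInf_le h

theorem exists_attrRank_eq_succ (h : w ∈ Attr A T) (hT : w ∉ T) :
    ∃ n, attrRank A T w = n + 1 ∧ w ∈ AttrStep A (AttrSeq A T n) ∧ w ∉ AttrSeq A T n := by
  have hmem := mem_attrSeq_attrRank h
  obtain ⟨n, hn⟩ : ∃ n, attrRank A T w = n + 1 :=
    Nat.exists_eq_succ_of_ne_zero fun h0 => hT (by rwa [h0] at hmem)
  rw [hn] at hmem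
  refine ⟨n, hn, hmem, fun hw => ?_⟩
  have := attrRank_le hw
  omega

theorem exists_edge_attrRank_lt (h : w ∈ Attr A T) (hT : w ∉ T) (he : A.eve w) :
    ∃ y, A.E w y ∧ y ∈ Attr A T ∧ attrRank A T y < attrRank A T w := by
  obtain ⟨n, hn, hstep, hnot⟩ := exists_attrRank_eq_succ h hT
  rcases hstep with (hw | ⟨-, y, hwy, hy⟩) | ⟨hadam, -⟩
  · exact absurd hw hnot
  · exact ⟨y, hwy, attrSeq_subset_attr A T n hy, hn ▸ Nat.lt_succ_of_le (attrRank_le hy)⟩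
  · exact absurd he hadam

theorem attrRank_lt_of_not_eve (h : w ∈ Attr A T) (hT : w ∉ T) (he : ¬ A.eve w)
    (hwy : A.E w y) : y ∈ Attr A T ∧ attrRank A T y < attrRank A T w := by
  obtain ⟨n, hn, hstep, hnot⟩ := exists_attrRank_eq_succ h hT
  rcases hstep with (hw | ⟨heve, -⟩) | ⟨-, hall⟩
  · exact absurd hw hnot
  · exact absurd heve he
  · have hy := hall y hwy
    exact ⟨attrSeq_subset_attr A T n hy, hn ▸ Nat.lt_succ_of_le (attrRank_le hy)⟩

end Attractor

theorem hist_eq_append (π : ℕ → V) (n : ℕ) :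
    hist π n = (List.ofFn fun i : Fin n => π i) ++ [π n] := by
  rw [hist, List.ofFn_succ', List.concat_eq_append]
  rfl

theorem hist_succ (π : ℕ → V) (n : ℕ) : hist π (n + 1) = hist π n ++ [π (n + 1)] :=
  hist_eq_append π (n + 1)

theorem getLast?_hist (π : ℕ → V) (n : ℕ) : (hist π n).getLast? = some (π n) := by
  rw [hist_eq_append, List.getLast?_concat]

theorem hist_add (π : ℕ → V) (N m : ℕ) :
    hist π (N + m) = (List.ofFn fun i : Fin N => π i) ++ hist (fun j => π (N + j)) m := by
  show List.ofFn (fun i : Fin (N + (m + 1)) => π i) = _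
  rw [List.ofFn_add]
  rfl

theorem mem_hist {π : ℕ → V} {n : ℕ} {x : V} : x ∈ hist π n ↔ ∃ m ≤ n, π m = x := by
  simp only [hist, List.mem_ofFn]
  exact ⟨fun ⟨i, hi⟩ => ⟨i, Nat.lt_succ_iff.mp i.isLt, hi⟩,
    fun ⟨m, hm, h⟩ => ⟨⟨m, Nat.lt_succ_of_le hm⟩, h⟩⟩

theorem self_mem_hist (π : ℕ → V) (n : ℕ) : π n ∈ hist π n :=
  mem_hist.mpr ⟨n, le_rfl, rfl⟩

section Plays

variable {A : Arena V} {σ : List V → V} {u : V} {T T₁ T₂ : Set V}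

open Classical in
noncomputable def Arena.outcome (A : Arena V) (σ : List V → V) (c : V → V) (u : V) : ℕ → V
  | 0 => u
  | n + 1 =>
    if A.eve (A.outcome σ c u n) then σ (List.ofFn fun i : Fin (n + 1) => A.outcome σ c u i)
    else c (A.outcome σ c u n)

theorem exists_play (hσ : Legal A σ) {c : V → V} (hc : ∀ w, A.E w (c w)) (u : V) :
    ∃ π, IsPlay A u π ∧ ConsistentEve A σ π ∧ ∀ n, ¬ A.eve (π n) → π (n + 1) = c (π n) := by
  classical
  set π := A.outcome σ c u
  have hstep : ∀ n, π (n + 1) = if A.eve (π n) then σ (hist π n) else c (π n) := by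
    intro n
    show A.outcome σ c u (n + 1) = _
    rw [Arena.outcome]
    rfl
  refine ⟨π, ⟨by simp only [π, Arena.outcome], fun n => ?_⟩, fun n he => ?_,
    fun n he => ?_⟩
  · by_cases he : A.eve (π n)
    · rw [hstep, if_pos he, hist_eq_append]
      exact hσ _ _
    · rw [hstep, if_neg he]
      exact hc _
  · rw [hstep, if_pos he]
  · rw [hstep, if_neg he]

theorem Legal.append_left (hσ : Legal A σ) (pre : List V) : Legal A fun l => σ (pre ++ l) :=
  fun l w => by simpa only [List.append_assoc] using hσ (pre ++ l) w

theorem exists_play_splice {π π' : ℕ → V} {N : ℕ} (hπ : IsPlay A u π)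
    (hc : ConsistentEve A σ π) (hπ' : IsPlay A (π N) π')
    (hc' : ConsistentEve A (fun l => σ ((List.ofFn fun i : Fin N => π i) ++ l)) π') :
    ∃ ρ, IsPlay A u ρ ∧ ConsistentEve A σ ρ ∧ (∀ n ≤ N, ρ n = π n) ∧ ∀ m, ρ (N + m) = π' m := by
  set ρ : ℕ → V := fun n => if n ≤ N then π n else π' (n - N)
  have hpre : ∀ n ≤ N, ρ n = π n := fun n hn => if_pos hn
  have hsuf : ∀ m, ρ (N + m) = π' m := by
    intro m
    rcases m with _ | m
    · simpa [ρ] using hπ'.1.symm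
    · simp [ρ]
  have hhist : ∀ n ≤ N, hist ρ n = hist π n := fun n hn =>
    List.ofFn_inj.mpr (funext fun i => hpre i (by omega))
  have hsplit : ∀ m, hist ρ (N + m) = (List.ofFn fun i : Fin N => π i) ++ hist π' m := by
    intro m
    rw [hist_add, show (fun j => ρ (N + j)) = π' from funext hsuf]
    exact congrArg (· ++ _) (List.ofFn_inj.mpr (funext fun i => hpre i i.2.le))
  refine ⟨ρ, ⟨hpre 0 (Nat.zero_le N) ▸ hπ.1, fun n => ?_⟩, fun n he => ?_, hpre, hsuf⟩
  · rcases lt_or_ge n N with hn | hn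
    · rw [hpre n hn.le, hpre (n + 1) hn]
      exact hπ.2 n
    · obtain ⟨m, rfl⟩ := Nat.exists_eq_add_of_le hn
      rw [hsuf, Nat.add_assoc, hsuf]
      exact hπ'.2 m
  · rcases lt_or_ge n N with hn | hn
    · rw [hpre n hn.le] at he
      rw [hpre (n + 1) hn, hhist n hn.le]
      exact hc n he
    · obtain ⟨m, rfl⟩ := Nat.exists_eq_add_of_le hn
      rw [hsuf] at he
      rw [Nat.add_assoc, hsuf, hc' m he, hsplit]

def ForcesReach (A : Arena V) (σ : List V → V) (u : V) (T : Set V) : Prop :=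
  ∀ π, IsPlay A u π → ConsistentEve A σ π → ∃ n, π n ∈ T

theorem ForcesReach.residual {π : ℕ → V} {N : ℕ} (hσ : ForcesReach A σ u T)
    (hπ : IsPlay A u π) (hc : ConsistentEve A σ π) (hN : ∀ n < N, π n ∉ T) :
    ForcesReach A (fun l => σ ((List.ofFn fun i : Fin N => π i) ++ l)) (π N) T := by
  intro π' hπ' hc'
  obtain ⟨ρ, hρ, hcρ, hpre, hsuf⟩ := exists_play_splice hπ hc hπ' hc'
  obtain ⟨n, hn⟩ := hσ ρ hρ hcρ
  rcases lt_or_ge n N with h | h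
  · exact absurd (hpre n h.le ▸ hn) (hN n h)
  · obtain ⟨m, rfl⟩ := Nat.exists_eq_add_of_le h
    exact ⟨m, hsuf m ▸ hn⟩

theorem ForcesReach.mem_attr [Finite V] (hlegal : Legal A σ) (hσ : ForcesReach A σ u T) :
    u ∈ Attr A T := by
  by_contra hu
  obtain ⟨π, hπ, hc, hadam⟩ :=
    exists_play hlegal (A.edge_succWith (· ∉ Attr A T)) u
  have hout : ∀ n, π n ∉ Attr A T := by
    intro n
    induction n with
    | zero => exact hπ.1 ▸ hu
    | succ n ih =>
      by_cases he : A.eve (π n)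
      · exact fun h => ih (mem_attr_of_edge he (hπ.2 n) h)
      · rw [hadam n he]
        exact A.succWith_spec (exists_edge_notMem_attr ih he)
  obtain ⟨n, hn⟩ := hσ π hπ hc
  exact hout n (subset_attr A T hn)

theorem ForcesReach.attr_total [Finite V] (hlegal : Legal A σ) (h₁ : ForcesReach A σ u T₁)
    (h₂ : ForcesReach A σ u T₂) :
    (T₁ ∩ Attr A T₂).Nonempty ∨ (T₂ ∩ Attr A T₁).Nonempty := by
  classical
  obtain ⟨π, hπ, hc, -⟩ :=
    exists_play hlegal (fun w => (A.succ_exists w).choose_spec) u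
  have hvisit : ∃ n, π n ∈ T₁ ∪ T₂ := (h₁ π hπ hc).imp fun _ => Or.inl
  have hfirst : ∀ n < Nat.find hvisit, π n ∉ T₁ ∪ T₂ := fun _ => Nat.find_min hvisit
  rcases Nat.find_spec hvisit with hT | hT
  · exact Or.inl ⟨_, hT, (h₂.residual hπ hc fun n hn h => hfirst n hn (Or.inr h)).mem_attr
      (hlegal.append_left _)⟩
  · exact Or.inr ⟨_, hT, (h₁.residual hπ hc fun n hn h => hfirst n hn (Or.inl h)).mem_attr
      (hlegal.append_left _)⟩

end Plays

theorem List.countP_lt_countP_of_imp {α : Type*} {p q : α → Bool} {l : List α}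
    (hpq : ∀ x ∈ l, p x = true → q x = true) {a : α} (ha : a ∈ l) (hp : p a = false)
    (hq : q a = true) : l.countP p < l.countP q := by
  induction l with
  | nil => simp at ha
  | cons b l ih =>
    have hle := List.countP_mono_left fun x hx => hpq x (List.mem_cons_of_mem b hx)
    have hb := hpq b List.mem_cons_self
    simp only [List.countP_cons]
    rcases List.mem_cons.mp ha with rfl | ha
    · simp [hp, hq]
      omega
    · have := ih (fun x hx => hpq x (List.mem_cons_of_mem b hx)) ha
      split_ifs <;> simp_all

theorem List.Pairwise.find?_eq_or_rel {α : Type*} {R : α → α → Prop} {p q : α → Bool}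
    {l : List α} {t t' : α} (hl : l.Pairwise R) (hqp : ∀ x, q x = true → p x = true)
    (hp : l.find? p = some t) (hq : l.find? q = some t') : t' = t ∨ (q t = false ∧ R t t') := by
  induction l with
  | nil => simp at hp
  | cons a l ih =>
    rw [List.pairwise_cons] at hl
    by_cases hpa : p a = true
    · obtain rfl : a = t := by simpa [List.find?_cons, hpa] using hp
      by_cases hqa : q a = true
      · exact Or.inl (by simpa [List.find?_cons, hqa] using hq.symm)
      · rw [List.find?_cons, Bool.eq_false_iff.mpr hqa] at hq
        exact Or.inr ⟨Bool.eq_false_iff.mpr hqa, hl.1 t' (List.mem_of_find?_eq_some hq)⟩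
    · have hqa : q a = false := Bool.eq_false_iff.mpr fun h => hpa (hqp a h)
      rw [List.find?_cons, Bool.eq_false_iff.mpr hpa] at hp
      rw [List.find?_cons, hqa] at hq
      exact ih hl.2 hp hq

theorem exists_pairwise_list_of_total {α ι : Type*} [Fintype ι] {R : α → α → Prop} (v : ι → α)
    (htot : ∀ i j, R (v i) (v j) ∨ R (v j) (v i)) (htrans : ∀ {a b c}, R a b → R b c → R a c) :
    ∃ L : List α, L.Pairwise R ∧ ∀ x, x ∈ L ↔ ∃ i, v i = x := by
  classical
  let le : ι → ι → Bool := fun i j => decide (R (v i) (v j))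
  have hsorted := List.pairwise_mergeSort (le := le)
    (fun i j l hij hjl => by simp only [le, decide_eq_true_eq] at *; exact htrans hij hjl)
    (fun i j => by simpa [le] using htot i j) Finset.univ.toList
  refine ⟨(Finset.univ.toList.mergeSort le).map v, ?_, fun x => ?_⟩
  · exact List.pairwise_map.mpr (hsorted.imp fun h => by simpa [le] using h)
  · simp [(List.mergeSort_perm _ _).mem_iff]

section ChainStrategy

variable [DecidableEq V] {A : Arena V} {L : List V} {u t t' : V} {π : ℕ → V} {n : ℕ}

def nextTarget (L h : List V) : Option V :=
  L.find? (· ∉ h)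

theorem nextTarget_eq_none {h : List V} : nextTarget L h = none ↔ ∀ x ∈ L, x ∈ h := by
  simp [nextTarget, List.find?_eq_none]

theorem mem_of_nextTarget_eq_some {h : List V} (ht : nextTarget L h = some t) : t ∈ L :=
  List.mem_of_find?_eq_some ht

theorem notMem_of_nextTarget_eq_some {h : List V} (ht : nextTarget L h = some t) : t ∉ h := by
  simpa using List.find?_some ht

-- Once every target is visited, `nextTarget` is `none` and any successor will do.
noncomputable def chainStrategy (A : Arena V) (L : List V) (u : V) (h : List V) : V :=
  A.succWith (fun y => ∀ t ∈ nextTarget L h,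
    y ∈ Attr A {t} ∧ attrRank A {t} y < attrRank A {t} (h.getLast?.getD u)) (h.getLast?.getD u)

theorem legal_chainStrategy (A : Arena V) (L : List V) (u : V) : Legal A (chainStrategy A L u) :=
  fun l w => by
    simpa only [chainStrategy, List.getLast?_concat, Option.getD_some] using A.edge_succWith _ w

theorem nextTarget_hist_succ (hL : L.Pairwise fun a b => a ∈ Attr A {b})
    (ht : nextTarget L (hist π n) = some t) (ht' : nextTarget L (hist π (n + 1)) = some t') :
    t' = t ∨ (π (n + 1) = t ∧ t ∈ Attr A {t'}) := by
  refine (hL.find?_eq_or_rel (fun x hx => ?_) ht ht').imp_right fun ⟨hvisit, htt'⟩ => ⟨?_, htt'⟩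
  · simp only [hist_succ, List.mem_append, decide_eq_true_eq, not_or] at hx ⊢
    exact hx.1
  · simp only [hist_succ, List.mem_append, List.mem_singleton, decide_eq_false_iff_not,
      not_not] at hvisit
    exact (hvisit.resolve_left (notMem_of_nextTarget_eq_some ht)).symm

theorem chainStrategy_step (hπ : IsPlay A u π) (hc : ConsistentEve A (chainStrategy A L u) π)
    (ht : nextTarget L (hist π n) = some t) (hn : π n ∈ Attr A {t}) :
    π (n + 1) ∈ Attr A {t} ∧ attrRank A {t} (π (n + 1)) < attrRank A {t} (π n) := by
  have hnt : π n ∉ ({t} : Set V) := fun h =>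
    notMem_of_nextTarget_eq_some ht (h ▸ self_mem_hist π n)
  by_cases he : A.eve (π n)
  · obtain ⟨y, hy, hyt⟩ := exists_edge_attrRank_lt hn hnt he
    have hlast : (hist π n).getLast?.getD u = π n := by rw [getLast?_hist]; rfl
    rw [hc n he, chainStrategy, hlast]
    refine A.succWith_spec (P := fun y => ∀ t ∈ nextTarget L (hist π n),
      y ∈ Attr A {t} ∧ attrRank A {t} y < attrRank A {t} (π n)) ⟨y, hy, fun t' ht' => ?_⟩ t ht
    obtain rfl : t = t' := Option.some_inj.mp (ht.symm.trans ht')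
    exact hyt
  · exact attrRank_lt_of_not_eve hn hnt he (hπ.2 n)

theorem chainStrategy_mem_attr (hL : L.Pairwise fun a b => a ∈ Attr A {b})
    (hu : ∀ t ∈ L, u ∈ Attr A {t}) (hπ : IsPlay A u π)
    (hc : ConsistentEve A (chainStrategy A L u) π) :
    ∀ n t, nextTarget L (hist π n) = some t → π n ∈ Attr A {t} := by
  intro n
  induction n with
  | zero => exact fun t ht => hπ.1 ▸ hu t (mem_of_nextTarget_eq_some ht)
  | succ n ih =>
    intro t' ht'
    obtain ⟨t, ht⟩ := Option.ne_none_iff_exists'.mp fun hnone =>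
      notMem_of_nextTarget_eq_some ht' <| hist_succ π n ▸
        List.mem_append_left _ (nextTarget_eq_none.mp hnone t' (mem_of_nextTarget_eq_some ht'))
    rcases nextTarget_hist_succ hL ht ht' with rfl | ⟨hvisit, htt'⟩
    · exact (chainStrategy_step hπ hc ht (ih _ ht)).1
    · exact hvisit ▸ htt'

theorem chainStrategy_exists_nextTarget_eq_none (hL : L.Pairwise fun a b => a ∈ Attr A {b})
    (hu : ∀ t ∈ L, u ∈ Attr A {t}) (hπ : IsPlay A u π)
    (hc : ConsistentEve A (chainStrategy A L u) π) : ∃ n, nextTarget L (hist π n) = none := by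
  suffices h : ∀ p : ℕ ×ₗ ℕ, ∀ n t, nextTarget L (hist π n) = some t →
      toLex (L.countP (· ∉ hist π n), attrRank A {t} (π n)) = p →
      ∃ m, nextTarget L (hist π m) = none by
    rcases h0 : nextTarget L (hist π 0) with _ | t
    · exact ⟨0, h0⟩
    · exact h _ 0 t h0 rfl
  intro p
  induction p using WellFoundedLT.induction with
  | _ p ih =>
  rintro n t ht rfl
  rcases ht' : nextTarget L (hist π (n + 1)) with _ | t'
  · exact ⟨n + 1, ht'⟩
  refine ih _ ?_ (n + 1) t' ht' rfl
  have hvisited : ∀ x, x ∉ hist π (n + 1) → x ∉ hist π n := fun x hx h =>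
    hx (hist_succ π n ▸ List.mem_append_left _ h)
  have hle : L.countP (· ∉ hist π (n + 1)) ≤ L.countP (· ∉ hist π n) :=
    List.countP_mono_left fun x _ => by simpa using hvisited x
  rw [Prod.Lex.toLex_lt_toLex]
  rcases nextTarget_hist_succ hL ht ht' with rfl | ⟨hvisit, -⟩
  · refine hle.lt_or_eq.imp id fun heq => ⟨heq, ?_⟩
    exact (chainStrategy_step hπ hc ht (chainStrategy_mem_attr hL hu hπ hc n _ ht)).2
  · refine Or.inl (List.countP_lt_countP_of_imp (fun x _ => by simpa using hvisited x)
      (mem_of_nextTarget_eq_some ht) ?_ ?_)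
    · simp [hvisit, hist_succ]
    · simpa using notMem_of_nextTarget_eq_some ht

theorem forcesReach_chainStrategy (hL : L.Pairwise fun a b => a ∈ Attr A {b})
    (hu : ∀ t ∈ L, u ∈ Attr A {t}) (htL : t ∈ L) : ForcesReach A (chainStrategy A L u) u {t} := by
  intro π hπ hc
  obtain ⟨N, hN⟩ := chainStrategy_exists_nextTarget_eq_none hL hu hπ hc
  obtain ⟨m, -, hm⟩ := mem_hist.mp (nextTarget_eq_none.mp hN t htL)
  exact ⟨m, hm⟩

end ChainStrategy

/-- with singleton reachability sets `{v_1},…,{v_k}`, Eve wins from `u`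
iff `u` is in every attractor `Attr(v_i)` and the reachability preorder is total on
`{v_1,…,v_k}`. -/
theorem singleton_genReach_characterization {V : Type} [Fintype V] {k : ℕ}
    (A : Arena V) (v : Fin k → V) (u : V) :
    EveWinsGenReach A (fun i => {v i}) u ↔
      ((∀ i, u ∈ Attr A {v i}) ∧
        ∀ i j, v i ∈ Attr A {v j} ∨ v j ∈ Attr A {v i}) := by
  classical
  constructor
  · rintro ⟨σ, hlegal, hwin⟩
    have hσ : ∀ i, ForcesReach A σ u {v i} := fun i π hπ hc => hwin π hπ hc i
    refine ⟨fun i => (hσ i).mem_attr hlegal, fun i j => ?_⟩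
    simpa only [Set.singleton_inter_nonempty] using (hσ i).attr_total hlegal (hσ j)
  · rintro ⟨hu, htot⟩
    obtain ⟨L, hL, hmem⟩ :=
      exists_pairwise_list_of_total (R := fun a b => a ∈ Attr A {b}) v htot mem_attr_trans
    have huL : ∀ t ∈ L, u ∈ Attr A {t} := fun t ht => by
      obtain ⟨i, rfl⟩ := (hmem t).mp ht
      exact hu i
    exact ⟨chainStrategy A L u, legal_chainStrategy A L u, fun π hπ hc i =>
      forcesReach_chainStrategy hL huL ((hmem _).mpr ⟨i, rfl⟩) π hπ hc⟩
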